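/- Let G be a graph on a partition P of [n+1] and let f : X → (ℝ^d)^n be a G-condensed map. Then f(X) ⊆ U_G ∩ U_G^1. -/

import Mathlib

open scoped BigOperators
open Finset

noncomputable section

namespace SinhaKnots

attribute [local instance] Classical.propDecidable

/-- `ℝ^d` with the Euclidean norm. -/
abbrev Rd (d : ℕ) := EuclideanSpace ℝ (Fin d)

/-- `(ℝ^d)^m` with the Euclidean norm. -/
abbrev Vec (m d : ℕ) := PiLp 2 (fun _ : Fin m => Rd d)

/-- The first standard basis vector `u = (1,0,…,0)` of `ℝ^d`. -/
def uVec (d : ℕ) : Rd d := if h : 0 < d then EuclideanSpace.single ⟨0, h⟩ 1 else 0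

/-- The second standard basis vector `v = (0,1,0,…,0)` of `ℝ^d`. -/
def vVec (d : ℕ) : Rd d := if h : 1 < d then EuclideanSpace.single ⟨1, h⟩ 1 else 0

/-- The first coordinate of a vector of `ℝ^d`. -/
def fst {d : ℕ} (x : Rd d) : ℝ := if h : 0 < d then x ⟨0, h⟩ else 0

/-- A partition of `[n+1] = {0,1,…,n+1}` into (at least two) nonempty consecutive intervals,
encoded as a monotone surjection onto `Fin (p+2)`; the pieces are the fibers, totally
ordered via the index, and `p` is the number of non-extremal pieces. -/
structure IntervalPartition (n : ℕ) where
  p : ℕ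
  toFun : Fin (n + 2) → Fin (p + 2)
  mono : Monotone toFun
  surj : Function.Surjective toFun

/-- `Q` is a subdivision of `P`: every piece of `Q` is contained in a piece of `P`,
and `Q ≠ P` (equivalently, `Q` has strictly more pieces). -/
def Subdivides {n : ℕ} (Q P : IntervalPartition n) : Prop :=
  (∀ i j, Q.toFun i = Q.toFun j → P.toFun i = P.toFun j) ∧ P.p < Q.p

/-- The element `i+1` of `[n+1]`, corresponding to the `i`-th component of `(ℝ^d)^n`. -/
def elt (n : ℕ) (i : Fin n) : Fin (n + 2) := ⟨(i : ℕ) + 1, by omega⟩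

/-- The finest partition of `[n+1]`, into singletons. -/
def finest (n : ℕ) : IntervalPartition n :=
  ⟨n, id, monotone_id, Function.surjective_id⟩

variable {n : ℕ}

/-- The piece of `P` with index `a`, as a finite set of elements of `[n+1]`. -/
def fiber (P : IntervalPartition n) (a : Fin (P.p + 2)) : Finset (Fin (n + 2)) :=
  Finset.univ.filter fun i => P.toFun i = a

lemma fiber_nonempty (P : IntervalPartition n) (a : Fin (P.p + 2)) : (fiber P a).Nonempty := by
  obtain ⟨i, hi⟩ := P.surj a
  exact ⟨i, by simp [fiber, hi]⟩

/-- The minimal element of a piece. -/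
def minElt (P : IntervalPartition n) (a : Fin (P.p + 2)) : Fin (n + 2) :=
  (fiber P a).min' (fiber_nonempty P a)

/-- The maximal element of a piece. -/
def maxElt (P : IntervalPartition n) (a : Fin (P.p + 2)) : Fin (n + 2) :=
  (fiber P a).max' (fiber_nonempty P a)

/-- `c_α = ∑_{i ∈ α} c_i`. -/
def cPiece (c : Fin (n + 2) → ℝ) (P : IntervalPartition n) (a : Fin (P.p + 2)) : ℝ :=
  ∑ i ∈ fiber P a, c i

/-- `c_{≤α} = ∑_{γ < α} c_γ + c_α/2`. -/
def cLE (c : Fin (n + 2) → ℝ) (P : IntervalPartition n) (a : Fin (P.p + 2)) : ℝ :=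
  (∑ i ∈ Finset.univ.filter fun i => P.toFun i < a, c i) + cPiece c P a / 2

/-- `c_{≥α} = ∑_{γ > α} c_γ + c_α/2`. -/
def cGE (c : Fin (n + 2) → ℝ) (P : IntervalPartition n) (a : Fin (P.p + 2)) : ℝ :=
  (∑ i ∈ Finset.univ.filter fun i => a < P.toFun i, c i) + cPiece c P a / 2

/-- `c_{αβ} = ∑_{α < γ < β} c_γ + (c_α + c_β)/2`. -/
def cBetween (c : Fin (n + 2) → ℝ) (P : IntervalPartition n) (a b : Fin (P.p + 2)) : ℝ :=
  (∑ i ∈ Finset.univ.filter fun i => a < P.toFun i ∧ P.toFun i < b, c i)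
    + (cPiece c P a + cPiece c P b) / 2

/-- The tuple `x` indexed by the non-extremal pieces, extended to all pieces by the fixed
values `x₀ = (-1+ρc_{α₀}/2)u` and `x_{p+1} = (1-ρc_{α_{p+1}}/2)u` on the extremal pieces. -/
def extTuple (ρ : ℝ) (c : Fin (n + 2) → ℝ) (P : IntervalPartition n) {d : ℕ}
    (x : Vec P.p d) : Fin (P.p + 2) → Rd d := fun a =>
  if _h0 : (a : ℕ) = 0 then (-1 + ρ * cPiece c P 0 / 2) • uVec d
  else if _h1 : (a : ℕ) = P.p + 1 then
    (1 - ρ * cPiece c P (Fin.last (P.p + 1)) / 2) • uVec d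
  else x ⟨(a : ℕ) - 1, by have := a.isLt; omega⟩

/-- The displacement (along `u`) of the center of the subsegment corresponding to the
`Q`-piece of `i` inside the segment of the `P`-piece of `i`, for a refinement `Q` of `P`. -/
def offsetQ (ρ : ℝ) (c : Fin (n + 2) → ℝ) (P Q : IntervalPartition n) (i : Fin (n + 2)) : ℝ :=
  ρ * (- cPiece c P (P.toFun i) / 2
    + (∑ j ∈ Finset.univ.filter fun j => P.toFun j = P.toFun i ∧ Q.toFun j < Q.toFun i, c j)
    + cPiece c Q (Q.toFun i) / 2)

/-- The affine injection `e_{P,Q} : (ℝ^d)^p → (ℝ^d)^q` for a refinement `Q` of `P`. -/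
def eMap (ρ : ℝ) (c : Fin (n + 2) → ℝ) (P Q : IntervalPartition n) {d : ℕ}
    (x : Vec P.p d) : Vec Q.p d := WithLp.toLp 2 fun b =>
  extTuple ρ c P x (P.toFun (minElt Q (elt Q.p b)))
    + offsetQ ρ c P Q (minElt Q (elt Q.p b)) • uVec d

/-- The affine injection `e_P : (ℝ^d)^p → (ℝ^d)^n`. -/
def ePt (ρ : ℝ) (c : Fin (n + 2) → ℝ) (P : IntervalPartition n) {d : ℕ}
    (x : Vec P.p d) : Vec n d :=
  eMap ρ c P (finest n) x

/-- `ε_P = ε/8^{n-p}`. -/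
def epsP (ε : ℝ) (P : IntervalPartition n) : ℝ := ε / 8 ^ (n - P.p)

/-- The open `ε_P`-neighborhood `ν_P` of `e_P((ℝ^d)^p)` in `(ℝ^d)^n`. -/
def nuP (ρ ε : ℝ) (c : Fin (n + 2) → ℝ) (P : IntervalPartition n) (d : ℕ) : Set (Vec n d) :=
  {y | ∃ x : Vec P.p d, ‖y - ePt ρ c P x‖ < epsP ε P}

/-- The orthogonal projection `π_P : (ℝ^d)^n → (ℝ^d)^p`, i.e. the unique minimizer of
`x ↦ |y - e_P(x)|`; explicitly, its `α`-component is the average of `y_i - o_i u` over the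
elements `i` of the piece `α`, where `o_i` is the offset of `i` in `e_P`. -/
def projP (ρ : ℝ) (c : Fin (n + 2) → ℝ) (P : IntervalPartition n) {d : ℕ}
    (y : Vec n d) : Vec P.p d := WithLp.toLp 2 fun a =>
  ((Finset.univ.filter fun i : Fin n => P.toFun (elt n i) = elt P.p a).card : ℝ)⁻¹ •
    ∑ i ∈ Finset.univ.filter fun i : Fin n => P.toFun (elt n i) = elt P.p a,
      (y i - offsetQ ρ c P (finest n) (elt n i) • uVec d)

/-- The component of a tuple `x ∈ (ℝ^d)^m` at a non-extremal vertex index `w` (and `0` at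
the extremal indices, where there is no component). -/
def comp {m d : ℕ} (x : Vec m d) (w : Fin (m + 2)) : Rd d :=
  if h : 0 < (w : ℕ) ∧ (w : ℕ) < m + 1 then x ⟨(w : ℕ) - 1, by omega⟩ else 0

/-- `d_{αβ}(P) = ρ c_{αβ} - ε_P`. -/
def dBound (ρ ε : ℝ) (c : Fin (n + 2) → ℝ) (P : IntervalPartition n)
    (a b : Fin (P.p + 2)) : ℝ :=
  ρ * cBetween c P a b - epsP ε P

/-- `D_{αβ} = {x : |x_α - x_β| ≤ d_{αβ}(P)}`. -/
def Dset (ρ ε : ℝ) (c : Fin (n + 2) → ℝ) (P : IntervalPartition n) (d : ℕ)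
    (a b : Fin (P.p + 2)) : Set (Vec P.p d) :=
  {x | ‖comp x a - comp x b‖ ≤ dBound ρ ε c P a b}

/-- `E_α`. -/
def Eset (ρ ε : ℝ) (c : Fin (n + 2) → ℝ) (P : IntervalPartition n) (d : ℕ)
    (a : Fin (P.p + 2)) : Set (Vec P.p d) :=
  {x | 1 - ρ * cPiece c P a / 2 + epsP ε P ≤ ‖comp x a‖
    ∨ fst (comp x a) ≤ -1 + ρ * cLE c P a - epsP ε P
    ∨ 1 - ρ * cGE c P a + epsP ε P ≤ fst (comp x a)}

/-- `E_P = ⋃_α E_α` over the non-extremal pieces `α`. -/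
def EsetP (ρ ε : ℝ) (c : Fin (n + 2) → ℝ) (P : IntervalPartition n) (d : ℕ) :
    Set (Vec P.p d) :=
  ⋃ a ∈ {a : Fin (P.p + 2) | 0 < (a : ℕ) ∧ (a : ℕ) < P.p + 1}, Eset ρ ε c P d a

/-- The configuration space `E(P) ⊂ (ℝ^d)^p`. -/
def Econf (ρ : ℝ) (c : Fin (n + 2) → ℝ) (P : IntervalPartition n) (d : ℕ) :
    Set (Vec P.p d) :=
  {x | (∀ w : Fin (P.p + 2), 0 < (w : ℕ) → (w : ℕ) < P.p + 1 →
          ‖comp x w‖ ≤ 1 - ρ * cPiece c P w / 2 ∧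
          -1 + ρ * cLE c P w ≤ fst (comp x w) ∧
          fst (comp x w) ≤ 1 - ρ * cGE c P w) ∧
       ∀ w w' : Fin (P.p + 2), 0 < (w : ℕ) → (w' : ℕ) < P.p + 1 → w < w' →
          ρ * cBetween c P w w' ≤ ‖comp x w - comp x w'‖}

/-! ### Graphs -/

/-- A graph on a partition with `m` non-extremal pieces: a finite set of edges, each being a
pair of vertices (vertices are the pieces, i.e. elements of `Fin (m+2)`). -/
abbrev GraphOn (m : ℕ) := Finset (Fin (m + 2) × Fin (m + 2))

/-- The edges go between non-extremal vertices and are increasing pairs. -/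
def IsGraphOn {m : ℕ} (G : GraphOn m) : Prop :=
  ∀ e ∈ G, 0 < (e.1 : ℕ) ∧ e.1 < e.2 ∧ (e.2 : ℕ) < m + 1

/-- Adjacency relation of a graph. -/
def adj {m : ℕ} (G : GraphOn m) (a b : Fin (m + 2)) : Prop :=
  ∃ e ∈ G, (e.1 = a ∧ e.2 = b) ∨ (e.1 = b ∧ e.2 = a)

/-- `conn G a b` : `a` and `b` lie in the same connected component of `G`. -/
def conn {m : ℕ} (G : GraphOn m) : Fin (m + 2) → Fin (m + 2) → Prop :=
  Relation.ReflTransGen (adj G)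

/-- A vertex is discrete if no edge is incident with it. -/
def IsDiscrete {m : ℕ} (G : GraphOn m) (a : Fin (m + 2)) : Prop :=
  ∀ e ∈ G, e.1 ≠ a ∧ e.2 ≠ a

lemma adj_symm {m : ℕ} (G : GraphOn m) : Symmetric (adj G) := by
  rintro a b ⟨e, he, h⟩
  exact ⟨e, he, h.symm⟩

/-- Being in the same connected component is an equivalence relation. -/
def connSetoid {m : ℕ} (G : GraphOn m) : Setoid (Fin (m + 2)) where
  r := conn G
  iseqv := by
    refine ⟨fun _ => Relation.ReflTransGen.refl, ?_, fun h h' => h.trans h'⟩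
    intro x y h
    induction h with
    | refl => exact Relation.ReflTransGen.refl
    | tail _ hab ih => exact Relation.ReflTransGen.head (adj_symm G hab) ih

/-- The number of connected components of a graph (all `m+2` vertices included). -/
def ncomp {m : ℕ} (G : GraphOn m) : ℕ := Fintype.card (Quotient (connSetoid G))

/-- `e` is a bridge of `G` if removing it increases the number of connected components. -/
def IsBridge {m : ℕ} (G : GraphOn m) (e : Fin (m + 2) × Fin (m + 2)) : Prop :=
  e ∈ G ∧ ncomp G < ncomp (G.erase e)

/-! ### Condensed maps -/

/-- The convex hull of `{f_j(x) : j ∈ α}`. -/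
def hullPoints {d : ℕ} (P : IntervalPartition n) {X : Type*} (f : X → Vec n d) (x : X)
    (a : Fin (P.p + 2)) : Set (Rd d) :=
  convexHull ℝ {q | ∃ j : Fin n, P.toFun (elt n j) = a ∧ q = f x j}

/-- `a` is a base (of its connected component of `G`) for the map `f`. -/
def IsBase {d : ℕ} (P : IntervalPartition n) (G : GraphOn P.p) {X : Type*}
    (f : X → Vec n d) (a : Fin (P.p + 2)) : Prop :=
  (∀ x : X, ∀ b, conn G a b → ∀ i : Fin n, P.toFun (elt n i) = b →
      f x i ∈ hullPoints P f x a)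
  ∧ ∀ e ∈ G, conn G a e.1 → ¬(e.1 < a ∧ e.2 < a)

/-- A map `f : X → (ℝ^d)^n` is `G`-condensed: it is proper and each connected component
of `G` has a base. -/
def IsCondensed {d : ℕ} (P : IntervalPartition n) (G : GraphOn P.p) {X : Type*}
    [TopologicalSpace X] (f : X → Vec n d) : Prop :=
  IsProperMap f ∧ ∀ a : Fin (P.p + 2), ∃ b, conn G a b ∧ IsBase P G f b

/-- `⋂_{(α,β) ∈ E(G)} D_{αβ}`. -/
def interD (ρ ε : ℝ) (c : Fin (n + 2) → ℝ) (P : IntervalPartition n) (d : ℕ)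
    (G : GraphOn P.p) : Set (Vec P.p d) :=
  ⋂ e ∈ G, Dset ρ ε c P d e.1 e.2

/-- `U_G`. -/
def Uset (ρ ε : ℝ) (c : Fin (n + 2) → ℝ) (P : IntervalPartition n) (d : ℕ)
    (G : GraphOn P.p) : Set (Vec n d) :=
  (nuP ρ ε c P d)ᶜ ∪ (projP ρ c P) ⁻¹' (interD ρ ε c P d G)

/-- Product of the projections to the first coordinate. -/
def p1 {m d : ℕ} (y : Vec m d) : Fin m → ℝ := fun i => fst (y i)

/-- `U_G^1`. -/
def Uset1 (ρ ε : ℝ) (c : Fin (n + 2) → ℝ) (P : IntervalPartition n) (d : ℕ)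
    (G : GraphOn P.p) : Set (Vec n d) :=
  (p1 ⁻¹' (p1 '' nuP ρ ε c P d))ᶜ
    ∪ p1 ⁻¹' (p1 '' ((projP ρ c P) ⁻¹' (interD ρ ε c P d G)))

/-! ### Contractions and homotopies -/

/-- The translation vector `A_e(s)` of the `e`-contraction. -/
def Acontr {d : ℕ} (P : IntervalPartition n) (G : GraphOn P.p)
    (e : Fin (P.p + 2) × Fin (P.p + 2)) (s : ℝ) : Vec n d := WithLp.toLp 2 fun i =>
  if conn (G.erase e) (P.toFun (elt n i)) e.1 then s • vVec d
  else if conn (G.erase e) (P.toFun (elt n i)) e.2 then -(s • vVec d) else 0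

/-- The `e`-contraction `F(x,s) = f(x) + A_e(s)` of `f` for `G`. -/
def econtr {d : ℕ} (P : IntervalPartition n) (G : GraphOn P.p)
    (e : Fin (P.p + 2) × Fin (P.p + 2)) {X : Type*} (f : X → Vec n d) :
    X × ↥(Set.Ici (0 : ℝ)) → Vec n d :=
  fun q => f q.1 + Acontr P G e (q.2 : ℝ)

/-- The `(e,e')`-contraction `F(x,s₁,s₂) = f(x) + A_e(s₁) + A_{e'}(s₂)` of `f` for `G`. -/
def eecontr {d : ℕ} (P : IntervalPartition n) (G : GraphOn P.p)
    (e e' : Fin (P.p + 2) × Fin (P.p + 2)) {X : Type*} (f : X → Vec n d) :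
    X × ↥(Set.Ici (0 : ℝ)) × ↥(Set.Ici (0 : ℝ)) → Vec n d :=
  fun q => f q.1 + Acontr P G e (q.2.1 : ℝ) + Acontr P G e' (q.2.2 : ℝ)

/-- The `(i,σ)`-contraction of a map `F` (σ = ±1): add `σsu` to the `i`-th component and
`-σsu` to the `(i+1)`-th component. Components are numbered `1,…,m` (the `k`-th coordinate
of `Vec m d` is component number `k+1`). -/
def icontr {m d : ℕ} {Y : Type*} (F : Y → Vec m d) (i : ℕ) (σ : ℝ) :
    Y × ↥(Set.Ici (0 : ℝ)) → Vec m d :=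
  fun q => WithLp.toLp 2 fun k => F q.1 k +
    (if (k : ℕ) + 1 = i then σ * (q.2 : ℝ)
     else if (k : ℕ) + 1 = i + 1 then -(σ * (q.2 : ℝ)) else 0) • uVec d

/-- The straight homotopy from `f` to `g`. -/
def straightH {V : Type*} [AddCommGroup V] [Module ℝ V] {Y : Type*} (f g : Y → V) :
    Y × ↥(Set.Icc (0 : ℝ) 1) → V :=
  fun q => (1 - (q.2 : ℝ)) • f q.1 + (q.2 : ℝ) • g q.1

/-! ### Merging pieces (the face operations δ) -/

/-- Value of the vertex map merging the pieces (0-based) `k` and `k+1`. -/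
def vmapVal (m k : ℕ) (a : ℕ) : ℕ :=
  if m = 0 then a else min (if a ≤ k then a else a - 1) m

/-- The vertex map of the merge, `Fin (m+2) → Fin (m-1+2)`. -/
def vmapFin (m k : ℕ) (a : Fin (m + 2)) : Fin (m - 1 + 2) :=
  ⟨vmapVal m k (a : ℕ), by have := a.isLt; unfold vmapVal; split <;> omega⟩

/-- The partition `δ_kP` obtained from `P` by uniting its `(k+1)`-th and `(k+2)`-th pieces
(i.e. the pieces of 0-based indices `k` and `k+1`). -/
def deltaPart (P : IntervalPartition n) (k : ℕ) : IntervalPartition n where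
  p := P.p - 1
  toFun := fun i => vmapFin P.p k (P.toFun i)
  mono := by
    intro a b hab
    have h2 : (P.toFun a : ℕ) ≤ (P.toFun b : ℕ) := P.mono hab
    simp only [vmapFin, Fin.mk_le_mk, vmapVal]
    split_ifs <;> omega
  surj := by
    intro b
    have hb := b.isLt
    by_cases h0 : P.p = 0
    · obtain ⟨i, hi⟩ := P.surj ⟨(b : ℕ), by omega⟩
      refine ⟨i, Fin.ext ?_⟩
      simp only [vmapFin, vmapVal, hi, h0, if_true]
    · rcases le_or_gt (b : ℕ) k with hbk | hbk
      · obtain ⟨i, hi⟩ := P.surj ⟨(b : ℕ), by omega⟩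
        refine ⟨i, Fin.ext ?_⟩
        simp only [vmapFin, vmapVal, hi, h0, if_false]
        split_ifs <;> omega
      · obtain ⟨i, hi⟩ := P.surj ⟨(b : ℕ) + 1, by omega⟩
        refine ⟨i, Fin.ext ?_⟩
        simp only [vmapFin, vmapVal, hi, h0, if_false]
        split_ifs <;> omega

/-- For a refinement pair (`Q` refines `P`): the piece of `P` containing a given piece of
`Q`. -/
def pieceMap (Q P : IntervalPartition n) : Fin (Q.p + 2) → Fin (P.p + 2) :=
  fun b => P.toFun (minElt Q b)

/-- The image graph on a coarser partition (e.g. `δ_iG` on `δ_iQ`). -/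
def pushGraph (Q P : IntervalPartition n) (G : GraphOn Q.p) : GraphOn P.p :=
  G.image fun e => (pieceMap Q P e.1, pieceMap Q P e.2)

/-- The image graph is an honest graph: no loops nor double edges are created
(injectivity of the edge map) and no edge is incident with an extremal piece. -/
def GoodPush (Q P : IntervalPartition n) (G : GraphOn Q.p) : Prop :=
  Set.InjOn (fun e : Fin (Q.p + 2) × Fin (Q.p + 2) => (pieceMap Q P e.1, pieceMap Q P e.2)) ↑G
  ∧ IsGraphOn (pushGraph Q P G)


/-! ### Auxiliary lemmas for statement 6 -/

section Statement6Aux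

variable {n : ℕ}

lemma toFun_zero (P : IntervalPartition n) : P.toFun 0 = 0 := by
  obtain ⟨j, hj⟩ := P.surj 0
  exact le_antisymm (hj ▸ P.mono (Fin.zero_le j)) (Fin.zero_le _)

lemma toFun_last (P : IntervalPartition n) : P.toFun (Fin.last (n + 1)) = Fin.last (P.p + 1) := by
  obtain ⟨j, hj⟩ := P.surj (Fin.last (P.p + 1))
  exact le_antisymm (Fin.le_last _) (hj ▸ P.mono (Fin.le_last j))

lemma lt_of_toFun_lt (P : IntervalPartition n) {i j : Fin (n + 2)}
    (h : P.toFun i < P.toFun j) : i < j := by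
  by_contra h'
  exact absurd (P.mono (not_lt.mp h')) (not_le.mpr h)

lemma mem_fiber {P : IntervalPartition n} {a : Fin (P.p + 2)} {i : Fin (n + 2)} :
    i ∈ fiber P a ↔ P.toFun i = a := by simp [fiber]

lemma toFun_minElt (P : IntervalPartition n) (a : Fin (P.p + 2)) :
    P.toFun (minElt P a) = a :=
  mem_fiber.mp ((fiber P a).min'_mem _)

lemma toFun_maxElt (P : IntervalPartition n) (a : Fin (P.p + 2)) :
    P.toFun (maxElt P a) = a :=
  mem_fiber.mp ((fiber P a).max'_mem _)

lemma elem_range {P : IntervalPartition n} {a : Fin (P.p + 2)}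
    (ha0 : 0 < (a : ℕ)) (ha1 : (a : ℕ) < P.p + 1) {i : Fin (n + 2)}
    (hi : P.toFun i = a) : 1 ≤ (i : ℕ) ∧ (i : ℕ) ≤ n := by
  constructor
  · by_contra h
    have h0 : i = 0 := Fin.ext (by rw [Fin.val_zero]; omega)
    rw [h0, toFun_zero] at hi
    have := congrArg Fin.val hi
    simp at this
    omega
  · by_contra h
    have h0 : i = Fin.last (n + 1) := Fin.ext (by have := i.isLt; simp [Fin.last]; omega)
    rw [h0, toFun_last] at hi
    have := congrArg Fin.val hi
    simp [Fin.last] at this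
    omega

lemma elt_mk {m : ℕ} {i : Fin (m + 2)} (h1 : 1 ≤ (i : ℕ)) (h2 : (i : ℕ) ≤ m) :
    elt m ⟨(i : ℕ) - 1, by omega⟩ = i := by
  apply Fin.ext
  simp [elt]
  omega

lemma minElt_finest (b : Fin (n + 2)) : minElt (finest n) b = b := by
  have hb : b ∈ fiber (finest n) b := mem_fiber.mpr rfl
  refine le_antisymm (Finset.min'_le _ _ hb) (Finset.le_min' _ _ _ fun y hy => ?_)
  exact (mem_fiber.mp hy : (finest n).toFun y = b).ge

lemma fiber_finest (b : Fin (n + 2)) : fiber (finest n) b = {b} := by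
  ext i
  simp only [Finset.mem_singleton]
  exact mem_fiber

lemma cPiece_finest (c : Fin (n + 2) → ℝ) (b : Fin (n + 2)) :
    cPiece c (finest n) b = c b := by
  unfold cPiece
  rw [fiber_finest, Finset.sum_singleton]

lemma ePt_apply (ρ : ℝ) (c : Fin (n + 2) → ℝ) (P : IntervalPartition n) {d : ℕ}
    (x : Vec P.p d) (b : Fin n) :
    ePt ρ c P x b = extTuple ρ c P x (P.toFun (elt n b))
      + offsetQ ρ c P (finest n) (elt n b) • uVec d := by
  show eMap ρ c P (finest n) x b = _
  rw [eMap, WithLp.ofLp_toLp]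
  show extTuple ρ c P x (P.toFun (minElt (finest n) (elt n b)))
      + offsetQ ρ c P (finest n) (minElt (finest n) (elt n b)) • uVec d = _
  rw [minElt_finest]

lemma offsetQ_finest (ρ : ℝ) (c : Fin (n + 2) → ℝ) (P : IntervalPartition n)
    (i : Fin (n + 2)) :
    offsetQ ρ c P (finest n) i
      = ρ * (- cPiece c P (P.toFun i) / 2
        + (∑ j ∈ Finset.univ.filter fun j => P.toFun j = P.toFun i ∧ j < i, c j)
        + c i / 2) := by
  have h1 : (Finset.univ.filter fun j =>
        P.toFun j = P.toFun i ∧ (finest n).toFun j < (finest n).toFun i)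
      = Finset.univ.filter fun j => P.toFun j = P.toFun i ∧ j < i :=
    Finset.filter_congr fun j _ => Iff.rfl
  rw [offsetQ, h1]
  erw [cPiece_finest]
  rfl

lemma cPiece_pos {c : Fin (n + 2) → ℝ} (hc : ∀ i, 0 < c i) (P : IntervalPartition n)
    (a : Fin (P.p + 2)) : 0 < cPiece c P a :=
  Finset.sum_pos (fun i _ => hc i) (fiber_nonempty P a)

lemma single_le_cPiece {c : Fin (n + 2) → ℝ} (hc : ∀ i, 0 < c i) {P : IntervalPartition n}
    {a : Fin (P.p + 2)} {i : Fin (n + 2)} (hi : P.toFun i = a) : c i ≤ cPiece c P a :=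
  Finset.single_le_sum (fun j _ => (hc j).le) (mem_fiber.mpr hi)

lemma sum_lt_le {c : Fin (n + 2) → ℝ} (hc : ∀ i, 0 < c i) (P : IntervalPartition n)
    (i : Fin (n + 2)) :
    (∑ j ∈ Finset.univ.filter fun j => P.toFun j = P.toFun i ∧ j < i, c j) + c i
      ≤ cPiece c P (P.toFun i) := by
  have hsub : (Finset.univ.filter fun j => P.toFun j = P.toFun i ∧ j < i)
      ⊆ (fiber P (P.toFun i)).erase i := by
    intro j hj
    simp only [Finset.mem_filter, Finset.mem_univ, true_and] at hj
    exact Finset.mem_erase.mpr ⟨ne_of_lt hj.2, mem_fiber.mpr hj.1⟩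
  calc (∑ j ∈ Finset.univ.filter fun j => P.toFun j = P.toFun i ∧ j < i, c j) + c i
      ≤ (∑ j ∈ (fiber P (P.toFun i)).erase i, c j) + c i :=
        add_le_add_left
          (Finset.sum_le_sum_of_subset_of_nonneg hsub fun j _ _ => (hc j).le) _
    _ = cPiece c P (P.toFun i) := Finset.sum_erase_add _ _ (mem_fiber.mpr rfl)

lemma abs_offsetQ_le {ρ : ℝ} (hρ : 0 ≤ ρ) {c : Fin (n + 2) → ℝ} (hc : ∀ i, 0 < c i)
    (P : IntervalPartition n) (i : Fin (n + 2)) :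
    |offsetQ ρ c P (finest n) i| ≤ ρ * cPiece c P (P.toFun i) / 2 := by
  rw [offsetQ_finest]
  have h1 := sum_lt_le hc P i
  have h2 : (0:ℝ) ≤ ∑ j ∈ Finset.univ.filter fun j => P.toFun j = P.toFun i ∧ j < i, c j :=
    Finset.sum_nonneg fun j _ => (hc j).le
  have h3 := hc i
  set S := ∑ j ∈ Finset.univ.filter fun j => P.toFun j = P.toFun i ∧ j < i, c j
  set A := cPiece c P (P.toFun i)
  rw [abs_le]
  constructor <;> nlinarith [mul_nonneg hρ h2, mul_nonneg hρ h3.le,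
    mul_le_mul_of_nonneg_left h1 hρ]

lemma offsetQ_minElt_nonpos {ρ : ℝ} (hρ : 0 ≤ ρ) {c : Fin (n + 2) → ℝ} (hc : ∀ i, 0 < c i)
    (P : IntervalPartition n) (a : Fin (P.p + 2)) :
    offsetQ ρ c P (finest n) (minElt P a) ≤ 0 := by
  rw [offsetQ_finest]
  have hP : P.toFun (minElt P a) = a := toFun_minElt P a
  have hempty : (Finset.univ.filter fun j =>
      P.toFun j = P.toFun (minElt P a) ∧ j < minElt P a) = ∅ := by
    refine Finset.filter_eq_empty_iff.mpr fun j _ => ?_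
    rintro ⟨h1, h2⟩
    exact absurd (Finset.min'_le _ _ (mem_fiber.mpr (h1.trans hP))) (not_le.mpr h2)
  rw [hempty, Finset.sum_empty, hP]
  have h1 : c (minElt P a) ≤ cPiece c P a := single_le_cPiece hc hP
  nlinarith [mul_nonneg hρ (hc (minElt P a)).le]

lemma offsetQ_maxElt_nonneg {ρ : ℝ} (hρ : 0 ≤ ρ) {c : Fin (n + 2) → ℝ} (hc : ∀ i, 0 < c i)
    (P : IntervalPartition n) (a : Fin (P.p + 2)) :
    0 ≤ offsetQ ρ c P (finest n) (maxElt P a) := by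
  rw [offsetQ_finest]
  have hP : P.toFun (maxElt P a) = a := toFun_maxElt P a
  have heq : (Finset.univ.filter fun j =>
      P.toFun j = P.toFun (maxElt P a) ∧ j < maxElt P a) = (fiber P a).erase (maxElt P a) := by
    ext j
    simp only [Finset.mem_filter, Finset.mem_univ, true_and, Finset.mem_erase, mem_fiber, hP]
    constructor
    · rintro ⟨h1, h2⟩; exact ⟨ne_of_lt h2, h1⟩
    · rintro ⟨h1, h2⟩
      exact ⟨h2, lt_of_le_of_ne (Finset.le_max' _ _ (mem_fiber.mpr h2)) h1⟩
  rw [heq, hP]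
  have hsum : (∑ j ∈ (fiber P a).erase (maxElt P a), c j) + c (maxElt P a) = cPiece c P a :=
    Finset.sum_erase_add _ _ (mem_fiber.mpr hP)
  have h1 : c (maxElt P a) ≤ cPiece c P a := single_le_cPiece hc hP
  nlinarith [mul_nonneg hρ (hc (maxElt P a)).le]

lemma coord_norm_le {ι : Type*} [Fintype ι] {E : ι → Type*}
    [∀ i, SeminormedAddCommGroup (E i)] (x : PiLp 2 E) (i : ι) : ‖x i‖ ≤ ‖x‖ := by
  rw [PiLp.norm_eq_of_L2]
  have h : ‖x i‖ ^ 2 ≤ ∑ j, ‖x j‖ ^ 2 :=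
    Finset.single_le_sum (f := fun j => ‖x j‖ ^ 2) (fun j _ => sq_nonneg _) (Finset.mem_univ i)
  calc ‖x i‖ = Real.sqrt (‖x i‖ ^ 2) := (Real.sqrt_sq (norm_nonneg _)).symm
    _ ≤ _ := Real.sqrt_le_sqrt h

lemma norm_le_of_coords {ι : Type*} [Fintype ι] {E F : ι → Type*}
    [∀ i, SeminormedAddCommGroup (E i)] [∀ i, SeminormedAddCommGroup (F i)]
    (x : PiLp 2 E) (y : PiLp 2 F) (h : ∀ i, ‖x i‖ ≤ ‖y i‖) : ‖x‖ ≤ ‖y‖ := by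
  rw [PiLp.norm_eq_of_L2, PiLp.norm_eq_of_L2]
  exact Real.sqrt_le_sqrt (Finset.sum_le_sum fun i _ =>
    pow_le_pow_left₀ (norm_nonneg _) (h i) 2)

lemma fst_add {d : ℕ} (x y : Rd d) : fst (x + y) = fst x + fst y := by
  unfold fst; split <;> simp

lemma fst_smul {d : ℕ} (s : ℝ) (x : Rd d) : fst (s • x) = s * fst x := by
  unfold fst; split <;> simp

lemma fst_sub {d : ℕ} (x y : Rd d) : fst (x - y) = fst x - fst y := by
  unfold fst; split <;> simp

lemma fst_uVec {d : ℕ} (hd : 0 < d) : fst (uVec d) = 1 := by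
  unfold fst uVec
  rw [dif_pos hd, dif_pos hd, EuclideanSpace.single_apply, if_pos rfl]

lemma norm_uVec {d : ℕ} (hd : 0 < d) : ‖uVec d‖ = 1 := by
  unfold uVec
  rw [dif_pos hd, EuclideanSpace.norm_single, norm_one]

lemma abs_fst_le {d : ℕ} (x : Rd d) : |fst x| ≤ ‖x‖ := by
  unfold fst
  split
  · rw [← Real.norm_eq_abs]
    exact coord_norm_le x _
  · simp [norm_nonneg]

/-- The linear map `z ↦ (fst z) • u`. -/
def Lmap (d : ℕ) : Rd d →ₗ[ℝ] Rd d where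
  toFun z := fst z • uVec d
  map_add' x y := by
    show fst (x + y) • uVec _ = fst x • uVec _ + fst y • uVec _
    rw [fst_add, add_smul]
  map_smul' s x := by
    show fst (s • x) • uVec _ = s • (fst x • uVec _)
    rw [fst_smul, mul_smul]

lemma fst_Lmap {d : ℕ} (hd : 0 < d) (x : Rd d) : fst (Lmap d x) = fst x := by
  show fst (fst x • uVec d) = fst x
  rw [fst_smul, fst_uVec hd, mul_one]

lemma norm_Lmap_le {d : ℕ} (x : Rd d) : ‖Lmap d x‖ ≤ ‖x‖ := by
  show ‖fst x • uVec d‖ ≤ ‖x‖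
  rcases Nat.eq_zero_or_pos d with h | h
  · subst h
    unfold uVec
    rw [dif_neg (by omega)]
    simp [norm_nonneg]
  · rw [norm_smul, norm_uVec h, mul_one, Real.norm_eq_abs]
    exact abs_fst_le x

lemma Lmap_smul_u {d : ℕ} (hd : 0 < d) (s : ℝ) : Lmap d (s • uVec d) = s • uVec d := by
  show fst (s • uVec d) • uVec d = s • uVec d
  rw [fst_smul, fst_uVec hd, mul_one]

lemma epsP_pos {ε : ℝ} (hε : 0 < ε) (P : IntervalPartition n) : 0 < epsP ε P :=
  div_pos hε (pow_pos (by norm_num) _)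

lemma epsP_le {ε : ℝ} (hε : 0 < ε) (P : IntervalPartition n) : epsP ε P ≤ ε := by
  rw [epsP]
  exact div_le_self hε.le (one_le_pow₀ (by norm_num))

lemma mem_of_between {d : ℕ} {s : Set (Rd d)} (hs : Convex ℝ s) {x u' : Rd d}
    {t1 t2 : ℝ} (h1 : t1 ≤ 0) (h2 : 0 ≤ t2)
    (m1 : x + t1 • u' ∈ s) (m2 : x + t2 • u' ∈ s) : x ∈ s := by
  rcases eq_or_lt_of_le (h1.trans h2) with h | h
  · have ht1 : t1 = 0 := le_antisymm h1 (h ▸ h2)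
    simpa [ht1] using m1
  · have hq : (0:ℝ) < t2 - t1 := by linarith
    set a := t2 / (t2 - t1) with ha
    set b := -t1 / (t2 - t1) with hb
    have haa : 0 ≤ a := div_nonneg h2 hq.le
    have hbb : 0 ≤ b := div_nonneg (by linarith) hq.le
    have hne : t2 - t1 ≠ 0 := ne_of_gt hq
    have hab : a + b = 1 := by rw [ha, hb]; field_simp; ring
    have h0 : a * t1 + b * t2 = 0 := by rw [ha, hb]; field_simp; ring
    have := hs m1 m2 haa hbb hab
    have heq : a • (x + t1 • u') + b • (x + t2 • u')
        = (a + b) • x + (a * t1 + b * t2) • u' := by module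
    rw [heq, hab, h0, one_smul, zero_smul, add_zero] at this
    exact this

lemma conn_symm {m : ℕ} {G : GraphOn m} {a b : Fin (m + 2)} (h : conn G a b) :
    conn G b a := by
  induction h with
  | refl => exact Relation.ReflTransGen.refl
  | tail _ hab ih => exact Relation.ReflTransGen.head (adj_symm G hab) ih

lemma conn_nonextremal {m : ℕ} {G : GraphOn m} (hG : IsGraphOn G) {a b : Fin (m + 2)}
    (h : conn G a b) (hab : b ≠ a) : 0 < (b : ℕ) ∧ (b : ℕ) < m + 1 := by
  induction h with
  | refl => exact absurd rfl hab
  | tail h1 h2 ih =>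
    obtain ⟨e, he, hh⟩ := h2
    obtain ⟨he1, he2, he3⟩ := hG e he
    have he2' : (e.1 : ℕ) < (e.2 : ℕ) := he2
    rcases hh with ⟨hh1, hh2⟩ | ⟨hh1, hh2⟩
    · subst hh2; exact ⟨by omega, he3⟩
    · subst hh1; exact ⟨he1, by omega⟩

lemma comp_eq {m d : ℕ} (x : Vec m d) {w : Fin (m + 2)} (h0 : 0 < (w : ℕ))
    (h1 : (w : ℕ) < m + 1) : comp x w = x ⟨(w : ℕ) - 1, by omega⟩ :=
  dif_pos ⟨h0, h1⟩

lemma projP_close (ρ : ℝ) (c : Fin (n + 2) → ℝ) (P : IntervalPartition n) {d : ℕ}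
    (F : Vec n d) (w : Vec P.p d) (a : Fin P.p) :
    ‖projP ρ c P F a - extTuple ρ c P w (elt P.p a)‖ ≤ ‖F - ePt ρ c P w‖ := by
  classical
  set s := Finset.univ.filter fun i : Fin n => P.toFun (elt n i) = elt P.p a with hs
  -- s is nonempty
  have hane : (elt P.p a : ℕ) = (a : ℕ) + 1 := rfl
  have h0 : 0 < (elt P.p a : ℕ) := by omega
  have h1 : (elt P.p a : ℕ) < P.p + 1 := by have := a.isLt; omega
  obtain ⟨i0, hi0⟩ := P.surj (elt P.p a)
  obtain ⟨hi1, hi2⟩ := elem_range h0 h1 hi0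
  have hsne : s.Nonempty := by
    refine ⟨⟨(i0 : ℕ) - 1, by omega⟩, ?_⟩
    simp only [hs, Finset.mem_filter, Finset.mem_univ, true_and]
    have : elt n ⟨(i0 : ℕ) - 1, by omega⟩ = i0 := elt_mk hi1 hi2
    rw [this, hi0]
  have hcard : 0 < (s.card : ℝ) := by exact_mod_cast Finset.card_pos.mpr hsne
  set X := extTuple ρ c P w (elt P.p a) with hX
  set D := ‖F - ePt ρ c P w‖ with hD
  have hkey : projP ρ c P F a - X
      = ((s.card : ℝ))⁻¹ • ∑ i ∈ s, (F i - ePt ρ c P w i) := by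
    rw [projP, WithLp.ofLp_toLp, ← hs]
    have hterm : ∀ i ∈ s, F i - offsetQ ρ c P (finest n) (elt n i) • uVec d
        = (F i - ePt ρ c P w i) + X := by
      intro i hi
      simp only [hs, Finset.mem_filter, Finset.mem_univ, true_and] at hi
      rw [ePt_apply, hi, hX]
      abel
    rw [Finset.sum_congr rfl hterm, Finset.sum_add_distrib, Finset.sum_const, smul_add]
    rw [← Nat.cast_smul_eq_nsmul ℝ, smul_smul, inv_mul_cancel₀ (ne_of_gt hcard), one_smul]
    abel
  rw [hkey, norm_smul]
  have hbound : ‖∑ i ∈ s, (F i - ePt ρ c P w i)‖ ≤ (s.card : ℝ) * D := by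
    calc ‖∑ i ∈ s, (F i - ePt ρ c P w i)‖ ≤ ∑ i ∈ s, ‖F i - ePt ρ c P w i‖ :=
          norm_sum_le _ _
      _ ≤ ∑ _i ∈ s, D := by
          refine Finset.sum_le_sum fun i _ => ?_
          have : F i - ePt ρ c P w i = (F - ePt ρ c P w) i := rfl
          rw [this, hD]
          exact coord_norm_le _ i
      _ = (s.card : ℝ) * D := by rw [Finset.sum_const, nsmul_eq_mul]
  have : ‖((s.card : ℝ))⁻¹‖ = ((s.card : ℝ))⁻¹ := by
    rw [Real.norm_eq_abs, abs_of_nonneg (inv_nonneg.mpr hcard.le)]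
  rw [this]
  calc ((s.card : ℝ))⁻¹ * ‖∑ i ∈ s, (F i - ePt ρ c P w i)‖
      ≤ ((s.card : ℝ))⁻¹ * ((s.card : ℝ) * D) := by
        exact mul_le_mul_of_nonneg_left hbound (inv_nonneg.mpr hcard.le)
    _ = D := by field_simp

end Statement6Aux

section KeyLemma

variable {n : ℕ}

set_option maxHeartbeats 1600000 in
/-- The key geometric lemma: a point satisfying the base/hull conditions which lies in
`ν_P` projects into `⋂ D_{αβ}`. -/
lemma key_lemma {d : ℕ} (hd : 1 ≤ d) {ρ ε : ℝ} {c : Fin (n + 2) → ℝ}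
    (hρ0 : 0 < ρ) (hε0 : 0 < ε) (hc : ∀ i, 0 < c i)
    (hci : ∀ i : Fin (n + 2), 1 ≤ (i : ℕ) →
      100 * (ε / ρ + ∑ j ∈ Finset.univ.filter (fun j : Fin (n + 2) => (j : ℕ) < (i : ℕ)), c j)
        < c i)
    (P : IntervalPartition n) (G : GraphOn P.p) (hG : IsGraphOn G)
    (F : Vec n d)
    (hbase : ∀ a : Fin (P.p + 2), ∃ b, conn G a b ∧
      (∀ bb, conn G b bb → ∀ i : Fin n, P.toFun (elt n i) = bb →
        F i ∈ hullPoints P (fun _ : Unit => F) () b) ∧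
      (∀ e ∈ G, conn G b e.1 → ¬(e.1 < b ∧ e.2 < b)))
    (hF : F ∈ nuP ρ ε c P d) :
    projP ρ c P F ∈ interD ρ ε c P d G := by
  classical
  obtain ⟨w, hw⟩ := hF
  set E := epsP ε P with hE
  set D := ‖F - ePt ρ c P w‖ with hD
  have hD0 : 0 ≤ D := norm_nonneg _
  have hDE : D < E := hw
  have hE0 : 0 < E := epsP_pos hε0 P
  have hEε : E ≤ ε := epsP_le hε0 P
  set Xb := extTuple ρ c P w with hXb
  set x := projP ρ c P F with hx
  rw [interD, Set.mem_iInter₂]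
  intro e he
  obtain ⟨hα0, hαβ, hβ1⟩ := hG e he
  set α := e.1 with hαdef
  set β := e.2 with hβdef
  have hαβ' : (α : ℕ) < (β : ℕ) := hαβ
  have hβ0 : 0 < (β : ℕ) := by omega
  have hα1 : (α : ℕ) < P.p + 1 := by omega
  -- the base of the component of the edge
  obtain ⟨γ, hconnαγ, Hhull, Hord⟩ := hbase α
  have hconnγα : conn G γ α := conn_symm hconnαγ
  have hadjαβ : adj G α β := ⟨e, he, Or.inl ⟨rfl, rfl⟩⟩
  have hconnγβ : conn G γ β := hconnγα.tail hadjαβ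
  have hγβ : (γ : ℕ) ≤ (β : ℕ) := by
    by_contra hcon
    push_neg at hcon
    exact Hord e he hconnγα
      ⟨Fin.lt_def.mpr (by omega), Fin.lt_def.mpr (by omega)⟩
  -- the projected points are close to the tuple values
  have hz : ∀ v : Fin (P.p + 2), 0 < (v : ℕ) → (v : ℕ) < P.p + 1 →
      ‖comp x v - Xb v‖ ≤ D := by
    intro v h0 h1
    rw [comp_eq _ h0 h1]
    have h := projP_close ρ c P F w ⟨(v : ℕ) - 1, by omega⟩
    rwa [elt_mk h0 (by omega)] at h
  -- convexity of neighborhoods of the γ-segment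
  have hconvC : ∀ r : ℝ, 0 ≤ r → Convex ℝ {z : Rd d |
      ∃ t : ℝ, |t| ≤ ρ * cPiece c P γ / 2 ∧ ‖z - (Xb γ + t • uVec d)‖ ≤ r} := by
    intro r hr y1 hy1 y2 hy2 a b haa hbb hab
    obtain ⟨t1, ht1, hn1⟩ := hy1
    obtain ⟨t2, ht2, hn2⟩ := hy2
    refine ⟨a * t1 + b * t2, ?_, ?_⟩
    · calc |a * t1 + b * t2| ≤ |a * t1| + |b * t2| := abs_add_le _ _
        _ = a * |t1| + b * |t2| := by
            rw [abs_mul, abs_mul, abs_of_nonneg haa, abs_of_nonneg hbb]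
        _ ≤ a * (ρ * cPiece c P γ / 2) + b * (ρ * cPiece c P γ / 2) :=
            add_le_add (mul_le_mul_of_nonneg_left ht1 haa)
              (mul_le_mul_of_nonneg_left ht2 hbb)
        _ = ρ * cPiece c P γ / 2 := by rw [← add_mul, hab, one_mul]
    · have heq : a • y1 + b • y2 - (Xb γ + (a * t1 + b * t2) • uVec d)
          = a • (y1 - (Xb γ + t1 • uVec d)) + b • (y2 - (Xb γ + t2 • uVec d)) := by
        have h2 : a • (y1 - (Xb γ + t1 • uVec d)) + b • (y2 - (Xb γ + t2 • uVec d))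
            = a • y1 + b • y2 - ((a + b) • Xb γ + (a * t1 + b * t2) • uVec d) := by
          module
        rw [h2, hab, one_smul]
      calc ‖a • y1 + b • y2 - (Xb γ + (a * t1 + b * t2) • uVec d)‖
          = ‖a • (y1 - (Xb γ + t1 • uVec d)) + b • (y2 - (Xb γ + t2 • uVec d))‖ := by
            rw [heq]
        _ ≤ a * ‖y1 - (Xb γ + t1 • uVec d)‖ + b * ‖y2 - (Xb γ + t2 • uVec d)‖ := by
            refine (norm_add_le _ _).trans ?_
            rw [norm_smul, norm_smul, Real.norm_eq_abs, Real.norm_eq_abs,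
              abs_of_nonneg haa, abs_of_nonneg hbb]
        _ ≤ a * r + b * r :=
            add_le_add (mul_le_mul_of_nonneg_left hn1 haa)
              (mul_le_mul_of_nonneg_left hn2 hbb)
        _ = r := by rw [← add_mul, hab, one_mul]
  -- the hull of the γ points is within D of the γ-segment
  have hhullsub : hullPoints P (fun _ : Unit => F) () γ ⊆ {z : Rd d |
      ∃ t : ℝ, |t| ≤ ρ * cPiece c P γ / 2 ∧ ‖z - (Xb γ + t • uVec d)‖ ≤ D} := by
    refine convexHull_min ?_ (hconvC D hD0)
    rintro q ⟨j, hj, rfl⟩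
    refine ⟨offsetQ ρ c P (finest n) (elt n j), ?_, ?_⟩
    · have h := abs_offsetQ_le hρ0.le hc P (elt n j)
      rwa [hj] at h
    · have heq : F j - (Xb γ + offsetQ ρ c P (finest n) (elt n j) • uVec d)
          = (F - ePt ρ c P w) j := by
        show _ = F j - ePt ρ c P w j
        rw [ePt_apply, hj]
      rw [heq, hD]
      exact coord_norm_le _ j
  -- each piece connected to γ has tuple value near the γ-segment
  have keyb : ∀ b : Fin (P.p + 2), 0 < (b : ℕ) → (b : ℕ) < P.p + 1 → conn G γ b →
      ∃ t : ℝ, |t| ≤ ρ * cPiece c P γ / 2 ∧ ‖Xb b - (Xb γ + t • uVec d)‖ ≤ 2 * D := by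
    intro b hb0 hb1 hconnb
    have hCconv : Convex ℝ {z : Rd d |
        ∃ t : ℝ, |t| ≤ ρ * cPiece c P γ / 2 ∧ ‖z - (Xb γ + t • uVec d)‖ ≤ 2 * D} :=
      hconvC (2 * D) (by linarith)
    have hmem : ∀ i : Fin (n + 2), P.toFun i = b → 1 ≤ (i : ℕ) → (i : ℕ) ≤ n →
        Xb b + offsetQ ρ c P (finest n) i • uVec d ∈ {z : Rd d |
          ∃ t : ℝ, |t| ≤ ρ * cPiece c P γ / 2 ∧ ‖z - (Xb γ + t • uVec d)‖ ≤ 2 * D} := by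
      intro i hi h1 h2
      have hj : elt n ⟨(i : ℕ) - 1, by omega⟩ = i := elt_mk h1 h2
      set j : Fin n := ⟨(i : ℕ) - 1, by omega⟩ with hjdef
      have hFj : F j ∈ hullPoints P (fun _ : Unit => F) () γ :=
        Hhull b hconnb j (by rw [hj, hi])
      obtain ⟨t, ht, hnorm⟩ := hhullsub hFj
      refine ⟨t, ht, ?_⟩
      have hePt : ePt ρ c P w j = Xb b + offsetQ ρ c P (finest n) i • uVec d := by
        rw [ePt_apply, hj, hi]
      have hd1 : ‖Xb b + offsetQ ρ c P (finest n) i • uVec d - F j‖ ≤ D := by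
        have heq2 : Xb b + offsetQ ρ c P (finest n) i • uVec d - F j
            = -((F - ePt ρ c P w) j) := by
          rw [show (F - ePt ρ c P w) j = F j - ePt ρ c P w j from rfl, hePt]
          abel
        rw [heq2, norm_neg, hD]
        exact coord_norm_le _ j
      calc ‖Xb b + offsetQ ρ c P (finest n) i • uVec d - (Xb γ + t • uVec d)‖
          = ‖(Xb b + offsetQ ρ c P (finest n) i • uVec d - F j)
              + (F j - (Xb γ + t • uVec d))‖ := by rw [sub_add_sub_cancel]
        _ ≤ ‖Xb b + offsetQ ρ c P (finest n) i • uVec d - F j‖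
              + ‖F j - (Xb γ + t • uVec d)‖ := norm_add_le _ _
        _ ≤ D + D := add_le_add hd1 hnorm
        _ = 2 * D := by ring
    have hminr := elem_range hb0 hb1 (toFun_minElt P b)
    have hmaxr := elem_range hb0 hb1 (toFun_maxElt P b)
    exact mem_of_between hCconv (offsetQ_minElt_nonpos hρ0.le hc P b)
      (offsetQ_maxElt_nonneg hρ0.le hc P b)
      (hmem (minElt P b) (toFun_minElt P b) hminr.1 hminr.2)
      (hmem (maxElt P b) (toFun_maxElt P b) hmaxr.1 hmaxr.2)
  -- numeric facts
  have hργ0 : 0 ≤ ρ * cPiece c P γ := mul_nonneg hρ0.le (cPiece_pos hc P γ).le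
  have hne1 : ∀ v : Fin (P.p + 2), 0 < (v : ℕ) → 1 ≤ ((maxElt P v : Fin (n + 2)) : ℕ) := by
    intro v hv
    by_contra hcon
    push_neg at hcon
    have h0 : (maxElt P v : Fin (n + 2)) = 0 := Fin.ext (by rw [Fin.val_zero]; omega)
    have := toFun_maxElt P v
    rw [h0, toFun_zero] at this
    have := congrArg Fin.val this
    simp at this
    omega
  have hcα100 : 100 * ε < ρ * cPiece c P α := by
    have hM : P.toFun (maxElt P α) = α := toFun_maxElt P α
    have h1 := hci (maxElt P α) (hne1 α hα0)
    have h2 : (0:ℝ) ≤ ∑ j ∈ Finset.univ.filter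
        (fun j : Fin (n + 2) => (j : ℕ) < ((maxElt P α : Fin (n + 2)) : ℕ)), c j :=
      Finset.sum_nonneg fun j _ => (hc j).le
    have h3 : c (maxElt P α) ≤ cPiece c P α := single_le_cPiece hc hM
    have h4 : 100 * (ε / ρ) < cPiece c P α := by linarith
    have h5 := mul_lt_mul_of_pos_left h4 hρ0
    have h6 : ρ * (100 * (ε / ρ)) = 100 * ε := by field_simp
    linarith
  -- piece sums and cBetween
  have hmid : (0:ℝ) ≤ ∑ i ∈ Finset.univ.filter
      (fun i => α < P.toFun i ∧ P.toFun i < β), c i :=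
    Finset.sum_nonneg fun i _ => (hc i).le
  have hρB : ρ * cBetween c P α β
      = ρ * (∑ i ∈ Finset.univ.filter (fun i => α < P.toFun i ∧ P.toFun i < β), c i)
        + (ρ * cPiece c P α + ρ * cPiece c P β) / 2 := by
    rw [cBetween]; ring
  have hρmid : (0:ℝ) ≤ ρ * ∑ i ∈ Finset.univ.filter
      (fun i => α < P.toFun i ∧ P.toFun i < β), c i := mul_nonneg hρ0.le hmid
  -- main goal
  show x ∈ Dset ρ ε c P d α β
  simp only [Dset, Set.mem_setOf_eq, dBound, ← hE]
  obtain ⟨tα, htα, hXα⟩ := keyb α hα0 hα1 hconnγα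
  have hzα := hz α hα0 hα1
  have hzβ := hz β hβ0 hβ1
  have hud : 0 < d := hd
  rcases lt_or_eq_of_le hγβ with hlt | heqv
  · -- case γ < β
    obtain ⟨tβ, htβ, hXβ⟩ := keyb β hβ0 hβ1 hconnγβ
    have hcβγ : 100 * ε + 100 * (ρ * cPiece c P γ) < ρ * cPiece c P β := by
      have hM : P.toFun (maxElt P β) = β := toFun_maxElt P β
      have h1 := hci (maxElt P β) (hne1 β hβ0)
      have hsub : cPiece c P γ ≤ ∑ j ∈ Finset.univ.filter
          (fun j : Fin (n + 2) => (j : ℕ) < ((maxElt P β : Fin (n + 2)) : ℕ)), c j := by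
        refine Finset.sum_le_sum_of_subset_of_nonneg ?_ fun j _ _ => (hc j).le
        intro i hi
        have hiγ : P.toFun i = γ := mem_fiber.mp hi
        have : i < maxElt P β := by
          apply lt_of_toFun_lt P
          rw [hiγ, hM]
          exact Fin.lt_def.mpr hlt
        simp only [Finset.mem_filter, Finset.mem_univ, true_and]
        exact this
      have h3 : c (maxElt P β) ≤ cPiece c P β := single_le_cPiece hc hM
      have h4 : 100 * (ε / ρ + cPiece c P γ) < cPiece c P β := by linarith
      have h5 := mul_lt_mul_of_pos_left h4 hρ0
      have h6 : ρ * (100 * (ε / ρ + cPiece c P γ))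
          = 100 * ε + 100 * (ρ * cPiece c P γ) := by field_simp
      linarith
    have habs : |tα - tβ| ≤ ρ * cPiece c P γ := by
      have h1 := abs_le.mp htα
      have h2 := abs_le.mp htβ
      exact abs_le.mpr ⟨by linarith, by linarith⟩
    have hdecomp : comp x α - comp x β
        = (comp x α - Xb α) + (Xb α - (Xb γ + tα • uVec d))
          + ((tα - tβ) • uVec d)
          + ((Xb γ + tβ • uVec d) - Xb β) + (Xb β - comp x β) := by
      have : (tα - tβ) • uVec d = tα • uVec d - tβ • uVec d := sub_smul tα tβ _
      rw [this]
      abel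
    have hbound : ‖comp x α - comp x β‖ ≤ D + 2 * D + |tα - tβ| + 2 * D + D := by
      rw [hdecomp]
      have e5 : ‖(tα - tβ) • uVec d‖ = |tα - tβ| := by
        rw [norm_smul, norm_uVec hud, mul_one, Real.norm_eq_abs]
      have e4 : ‖(Xb γ + tβ • uVec d) - Xb β‖ ≤ 2 * D := by
        rw [norm_sub_rev]; exact hXβ
      have e6 : ‖Xb β - comp x β‖ ≤ D := by rw [norm_sub_rev]; exact hzβ
      calc ‖(comp x α - Xb α) + (Xb α - (Xb γ + tα • uVec d)) + ((tα - tβ) • uVec d)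
            + ((Xb γ + tβ • uVec d) - Xb β) + (Xb β - comp x β)‖
          ≤ ‖(comp x α - Xb α) + (Xb α - (Xb γ + tα • uVec d)) + ((tα - tβ) • uVec d)
            + ((Xb γ + tβ • uVec d) - Xb β)‖ + ‖Xb β - comp x β‖ := norm_add_le _ _
        _ ≤ ‖(comp x α - Xb α) + (Xb α - (Xb γ + tα • uVec d)) + ((tα - tβ) • uVec d)‖
            + ‖(Xb γ + tβ • uVec d) - Xb β‖ + ‖Xb β - comp x β‖ := by
            linarith [norm_add_le ((comp x α - Xb α) + (Xb α - (Xb γ + tα • uVec d))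
              + ((tα - tβ) • uVec d)) ((Xb γ + tβ • uVec d) - Xb β)]
        _ ≤ ‖(comp x α - Xb α) + (Xb α - (Xb γ + tα • uVec d))‖ + ‖(tα - tβ) • uVec d‖
            + ‖(Xb γ + tβ • uVec d) - Xb β‖ + ‖Xb β - comp x β‖ := by
            linarith [norm_add_le ((comp x α - Xb α) + (Xb α - (Xb γ + tα • uVec d)))
              ((tα - tβ) • uVec d)]
        _ ≤ ‖comp x α - Xb α‖ + ‖Xb α - (Xb γ + tα • uVec d)‖ + ‖(tα - tβ) • uVec d‖
            + ‖(Xb γ + tβ • uVec d) - Xb β‖ + ‖Xb β - comp x β‖ := by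
            linarith [norm_add_le (comp x α - Xb α) (Xb α - (Xb γ + tα • uVec d))]
        _ ≤ D + 2 * D + |tα - tβ| + 2 * D + D := by
            rw [e5]
            exact add_le_add (add_le_add (add_le_add (add_le_add hzα hXα) le_rfl) e4) e6
    linarith
  · -- case γ = β
    have hγeq : γ = β := Fin.ext heqv
    rw [hγeq] at htα hXα
    have hdecomp : comp x α - comp x β
        = (comp x α - Xb α) + (Xb α - (Xb β + tα • uVec d))
          + (tα • uVec d) + (Xb β - comp x β) := by abel
    have hbound : ‖comp x α - comp x β‖ ≤ D + 2 * D + |tα| + D := by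
      rw [hdecomp]
      have e3 : ‖tα • uVec d‖ = |tα| := by
        rw [norm_smul, norm_uVec hud, mul_one, Real.norm_eq_abs]
      have e4 : ‖Xb β - comp x β‖ ≤ D := by rw [norm_sub_rev]; exact hzβ
      calc ‖(comp x α - Xb α) + (Xb α - (Xb β + tα • uVec d)) + (tα • uVec d)
            + (Xb β - comp x β)‖
          ≤ ‖(comp x α - Xb α) + (Xb α - (Xb β + tα • uVec d)) + (tα • uVec d)‖
            + ‖Xb β - comp x β‖ := norm_add_le _ _
        _ ≤ ‖(comp x α - Xb α) + (Xb α - (Xb β + tα • uVec d))‖ + ‖tα • uVec d‖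
            + ‖Xb β - comp x β‖ := by
            linarith [norm_add_le ((comp x α - Xb α) + (Xb α - (Xb β + tα • uVec d)))
              (tα • uVec d)]
        _ ≤ ‖comp x α - Xb α‖ + ‖Xb α - (Xb β + tα • uVec d)‖ + ‖tα • uVec d‖
            + ‖Xb β - comp x β‖ := by
            linarith [norm_add_le (comp x α - Xb α) (Xb α - (Xb β + tα • uVec d))]
        _ ≤ D + 2 * D + |tα| + D := by
            rw [e3]
            exact add_le_add (add_le_add (add_le_add hzα hXα) le_rfl) e4
    have htα' : |tα| ≤ ρ * cPiece c P β / 2 := htα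
    linarith

end KeyLemma

/-- a `G`-condensed map has image inside `U_G ∩ U_G¹`. -/
theorem statement_6
    (n d : ℕ) (hn : 1 ≤ n) (hd : 1 ≤ d) (ρ ε : ℝ) (c : Fin (n + 2) → ℝ)
    (hρ0 : 0 < ρ) (hρ1 : ρ < 1) (hε0 : 0 < ε) (hc : ∀ i, 0 < c i)
    (hsum : ∑ i, c i = 1) (hc0 : 100 * ε / ρ < c 0)
    (hci : ∀ i : Fin (n + 2), 1 ≤ (i : ℕ) →
      100 * (ε / ρ + ∑ j ∈ Finset.univ.filter (fun j : Fin (n + 2) => (j : ℕ) < (i : ℕ)), c j)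
        < c i)
    (P : IntervalPartition n) (G : GraphOn P.p) (hG : IsGraphOn G)
    (X : Type) [TopologicalSpace X] (f : X → Vec n d)
    (hf : IsCondensed P G f) :
    ∀ x : X, f x ∈ Uset ρ ε c P d G ∩ Uset1 ρ ε c P d G := by
  intro x0
  obtain ⟨hproper, hbases⟩ := hf
  have hbaseF : ∀ a : Fin (P.p + 2), ∃ b, conn G a b ∧
      (∀ bb, conn G b bb → ∀ i : Fin n, P.toFun (elt n i) = bb →
        f x0 i ∈ hullPoints P (fun _ : Unit => f x0) () b) ∧
      (∀ e ∈ G, conn G b e.1 → ¬(e.1 < b ∧ e.2 < b)) := by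
    intro a
    obtain ⟨b, hconn, hb1, hb2⟩ := hbases a
    exact ⟨b, hconn, fun bb hbb i hi => hb1 x0 bb hbb i hi, hb2⟩
  constructor
  · -- membership in U_G
    by_cases hmem : f x0 ∈ nuP ρ ε c P d
    · exact Or.inr (key_lemma hd hρ0 hε0 hc hci P G hG (f x0) hbaseF hmem)
    · exact Or.inl hmem
  · -- membership in U_G^1
    by_cases hmem : f x0 ∈ p1 ⁻¹' (p1 '' nuP ρ ε c P d)
    · obtain ⟨y, hy, hpy⟩ := hmem
      set g : Vec n d := WithLp.toLp 2 fun i => Lmap d (f x0 i) with hg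
      have hgy : ∀ i, g i = Lmap d (y i) := by
        intro i
        have h1 : fst (y i) = fst (f x0 i) := congrFun hpy i
        show fst (f x0 i) • uVec d = fst (y i) • uVec d
        rw [h1]
      obtain ⟨w, hw⟩ := hy
      set w1 : Vec P.p d := WithLp.toLp 2 fun a => Lmap d (w a) with hw1
      have hLext : ∀ a : Fin (P.p + 2),
          Lmap d (extTuple ρ c P w a) = extTuple ρ c P w1 a := by
        intro a
        rw [extTuple, extTuple]
        split_ifs with h1 h2
        · exact Lmap_smul_u hd _
        · exact Lmap_smul_u hd _
        · rfl
      have hLePt : ∀ i : Fin n, Lmap d (ePt ρ c P w i) = ePt ρ c P w1 i := by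
        intro i
        rw [ePt_apply, ePt_apply, map_add, hLext, Lmap_smul_u hd]
      have hgnu : g ∈ nuP ρ ε c P d := by
        refine ⟨w1, lt_of_le_of_lt ?_ hw⟩
        refine norm_le_of_coords _ _ fun i => ?_
        have h1 : (g - ePt ρ c P w1) i = Lmap d ((y - ePt ρ c P w) i) := by
          show g i - ePt ρ c P w1 i = Lmap d (y i - ePt ρ c P w i)
          rw [map_sub, hgy i, hLePt i]
        rw [h1]
        exact norm_Lmap_le _
      have hbaseg : ∀ a : Fin (P.p + 2), ∃ b, conn G a b ∧
          (∀ bb, conn G b bb → ∀ i : Fin n, P.toFun (elt n i) = bb →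
            g i ∈ hullPoints P (fun _ : Unit => g) () b) ∧
          (∀ e ∈ G, conn G b e.1 → ¬(e.1 < b ∧ e.2 < b)) := by
        intro a
        obtain ⟨b, hconn, hb1, hb2⟩ := hbases a
        refine ⟨b, hconn, fun bb hbb i hi => ?_, hb2⟩
        have hf1 : f x0 i ∈ hullPoints P f x0 b := hb1 x0 bb hbb i hi
        have himg : (Lmap d) '' {q | ∃ j : Fin n, P.toFun (elt n j) = b ∧ q = f x0 j}
            = {q | ∃ j : Fin n, P.toFun (elt n j) = b ∧ q = g j} := by
          ext q
          constructor
          · rintro ⟨q', ⟨j, hjb, rfl⟩, rfl⟩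
            exact ⟨j, hjb, rfl⟩
          · rintro ⟨j, hjb, rfl⟩
            exact ⟨f x0 j, ⟨j, hjb, rfl⟩, rfl⟩
        show g i ∈ hullPoints P (fun _ : Unit => g) () b
        rw [hullPoints]
        have hmem2 : g i ∈ (Lmap d) '' (convexHull ℝ
            {q | ∃ j : Fin n, P.toFun (elt n j) = b ∧ q = f x0 j}) :=
          Set.mem_image_of_mem _ hf1
        rw [LinearMap.image_convexHull, himg] at hmem2
        exact hmem2
      have hkey := key_lemma hd hρ0 hε0 hc hci P G hG g hbaseg hgnu
      refine Or.inr ⟨g, hkey, ?_⟩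
      funext i
      show fst (g i) = fst (f x0 i)
      exact fst_Lmap hd (f x0 i)
    · exact Or.inl hmem

end SinhaKnots
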